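/- arXiv:2210.01566 — 2 statements merged into one kernel-verified Lean document; each statement's English description precedes it below -/
import Mathlib

section
/- (Proposition 6.16(P2): the trace of the adjoint.) Let T : H →L[K] H be of trace class and let S : H →L[K] H be an adjoint of T, i.e. ⟪x, T y⟫ = ⟪S x, y⟫ for all x, y : H. Then tr S = star (tr T), i.e. ∑' m, (S (e m)) m = star (∑' m, (T (e m)) m). -/
open Filter

noncomputable section

variable (K : Type*) [NontriviallyNormedField K] [IsUltrametricDist K]
  [CompleteSpace K] [StarRing K] [NormedStarGroup K]

/-- The p-adic coordinate Hilbert space: zero-convergent sequences in `K` with sup norm. -/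
abbrev H := ZeroAtInftyContinuousMap ℕ K

/-- The standard basis vectors of `H K`. -/
def e (n : ℕ) : H K where
  toFun := fun m => if m = n then 1 else 0
  continuous_toFun := continuous_of_discreteTopology
  zero_at_infty' := by
    rw [cocompact_eq_atTop]
    refine Filter.Tendsto.congr' ?_ tendsto_const_nhds
    filter_upwards [Filter.eventually_gt_atTop n] with m hm
    simp [Nat.ne_of_gt hm]

/-- The canonical inner product on `H K`: `⟪x, y⟫ = ∑' i, star (x i) * y i`. -/
def inner' (x y : H K) : K := ∑' i, star (x i) * y i

/-- A bounded operator is of trace class if its matrix entries vanish along the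
cofinite filter of `ℕ × ℕ`. -/
def IsTraceClass (T : H K →L[K] H K) : Prop :=
  Tendsto (fun q : ℕ × ℕ => (T (e K q.2)) q.1) Filter.cofinite (nhds 0)

/-! Pairing the adjoint relation with `e m` on both sides gives `S (e m) m = star (T (e m) m)`
for every `m`; the traces then agree termwise, and `star`, being a homeomorphism, commutes with `∑'`. -/

section

omit [IsUltrametricDist K] [CompleteSpace K] [NormedStarGroup K]

theorem inner'_e_left (m : ℕ) (y : H K) : inner' K (e K m) y = y m := by
  rw [inner', tsum_eq_single m fun i hi => by simp [e, hi]]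
  simp [e]

theorem inner'_e_right (m : ℕ) (x : H K) : inner' K x (e K m) = star (x m) := by
  rw [inner', tsum_eq_single m fun i hi => by simp [e, hi]]
  simp [e]

theorem apply_e_apply_eq_star_of_adjoint (T S : H K →L[K] H K)
    (hadj : ∀ x y : H K, inner' K x (T y) = inner' K (S x) y) (m : ℕ) :
    S (e K m) m = star (T (e K m) m) := by
  have h := hadj (e K m) (e K m)
  rw [inner'_e_left, inner'_e_right] at h
  rw [h, star_star]

end

theorem stmt12 (T S : H K →L[K] H K)
    (hadj : ∀ x y : H K, inner' K x (T y) = inner' K (S x) y) :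
    ∑' m, (S (e K m)) m = star (∑' m, (T (e K m)) m) := by
  rw [tsum_star]
  exact tsum_congr (apply_e_apply_eq_star_of_adjoint K T S hadj)
end
end

section
/- (Corollary 6.34: T(H)² = T(H).) Every trace class operator factors through the trace class: for every R : H →L[K] H of trace class there exist S, T : H →L[K] H, both of trace class, such that R = S ∘ T (i.e. R x = S (T x) for all x : H). -/
open Filter

noncomputable section

variable (K : Type*) [NontriviallyNormedField K] [IsUltrametricDist K]
  [CompleteSpace K] [StarRing K] [NormedStarGroup K]

/-!
Write `ρᵢ` for the `i`-th row of `R`, a functional on `H K`. Over an ultrametric field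
`‖ρᵢ‖ = supⱼ ‖R (e j) i‖`, so the trace class condition forces `‖ρᵢ‖ → 0`. Choose scalars
`dᵢ ≠ 0` with `dᵢ → 0` and `‖ρᵢ‖ ≤ ‖dᵢ‖²`. Then `R = D ∘ T`, where `D` is the diagonal operator
with entries `dᵢ` and `T` has rows `dᵢ⁻¹ ρᵢ`. `D` is trace class because `dᵢ → 0`; every entry `t`
of `T` in row `i` satisfies `‖t‖ ≤ ‖dᵢ‖`, hence `‖t‖² ≤ ‖dᵢ t‖`, which is the corresponding entry
of `R`, so `T` is trace class as well.
-/

open scoped Topology ZeroAtInfty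

namespace ZeroAtInftyContinuousMap

variable {α E 𝕜 : Type*} [TopologicalSpace α] [NormedAddCommGroup E]

theorem norm_apply_le (f : C₀(α, E)) (x : α) : ‖f x‖ ≤ ‖f‖ :=
  f.toBCF.norm_coe_le_norm x

theorem norm_le_of_forall_le {f : C₀(α, E)} {C : ℝ} (hC : 0 ≤ C) (h : ∀ x, ‖f x‖ ≤ C) :
    ‖f‖ ≤ C :=
  (BoundedContinuousFunction.norm_le hC).2 h

def ofTendstoAtTop (f : ℕ → E) (hf : Tendsto f atTop (𝓝 0)) : C₀(ℕ, E) :=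
  ⟨⟨f, continuous_of_discreteTopology⟩, by rwa [cocompact_eq_atTop]⟩

@[simp] theorem ofTendstoAtTop_apply (f : ℕ → E) (hf : Tendsto f atTop (𝓝 0)) (i : ℕ) :
    ofTendstoAtTop f hf i = f i :=
  rfl

theorem tendsto_atTop (f : C₀(ℕ, E)) : Tendsto f atTop (𝓝 0) := by
  simpa only [cocompact_eq_atTop] using ZeroAtInftyContinuousMapClass.zero_at_infty f

variable [NontriviallyNormedField 𝕜] [NormedSpace 𝕜 E]

variable (𝕜) in
def evalCLM (x : α) : C₀(α, E) →L[𝕜] E :=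
  LinearMap.mkContinuous
    { toFun := fun f => f x
      map_add' := fun _ _ => rfl
      map_smul' := fun _ _ => rfl }
    1 (fun f => by simpa using norm_apply_le f x)

@[simp] theorem evalCLM_apply (x : α) (f : C₀(α, E)) : evalCLM 𝕜 x f = f x :=
  rfl

theorem norm_evalCLM_le (x : α) : ‖(evalCLM 𝕜 x : C₀(α, E) →L[𝕜] E)‖ ≤ 1 :=
  LinearMap.mkContinuous_norm_le _ zero_le_one _

end ZeroAtInftyContinuousMap

open ZeroAtInftyContinuousMap

namespace ContinuousLinearMap

variable {𝕜 E F : Type*} [NontriviallyNormedField 𝕜] [NormedAddCommGroup E] [NormedSpace 𝕜 E]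
  [NormedAddCommGroup F] [NormedSpace 𝕜 F]

def c₀Pi (φ : ℕ → E →L[𝕜] F) (hφ : Tendsto (fun i => ‖φ i‖) atTop (𝓝 0)) :
    E →L[𝕜] C₀(ℕ, F) :=
  LinearMap.mkContinuousOfExistsBound
    { toFun := fun x => ofTendstoAtTop (fun i => φ i x)
        (squeeze_zero_norm (fun i => (φ i).le_opNorm x) (by simpa using hφ.mul_const ‖x‖))
      map_add' := fun x y => by ext i; simp
      map_smul' := fun c x => by ext i; simp } <| by
    obtain ⟨C, hC⟩ := hφ.bddAbove_range
    refine ⟨C, fun x => norm_le_of_forall_le ?_ fun i => ?_⟩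
    · exact mul_nonneg ((norm_nonneg _).trans (hC ⟨0, rfl⟩)) (norm_nonneg x)
    · exact (φ i).le_opNorm x |>.trans (mul_le_mul_of_nonneg_right (hC ⟨i, rfl⟩) (norm_nonneg x))

@[simp] theorem c₀Pi_apply (φ : ℕ → E →L[𝕜] F) (hφ : Tendsto (fun i => ‖φ i‖) atTop (𝓝 0))
    (x : E) (i : ℕ) : c₀Pi φ hφ x i = φ i x :=
  rfl

end ContinuousLinearMap

open ContinuousLinearMap

section StandardBasis

variable {𝕜 : Type*} [NontriviallyNormedField 𝕜]

@[simp] theorem e_apply (n m : ℕ) : e 𝕜 n m = if m = n then 1 else 0 :=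
  rfl

theorem norm_e_le (n : ℕ) : ‖e 𝕜 n‖ ≤ 1 :=
  norm_le_of_forall_le zero_le_one fun m => by rw [e_apply]; split <;> simp

theorem norm_apply_e_le {F : Type*} [NormedAddCommGroup F] [NormedSpace 𝕜 F]
    (φ : H 𝕜 →L[𝕜] F) (n : ℕ) : ‖φ (e 𝕜 n)‖ ≤ ‖φ‖ :=
  (φ.le_opNorm _).trans (mul_le_of_le_one_right (norm_nonneg φ) (norm_e_le n))

theorem sum_range_smul_e_apply (x : H 𝕜) (n m : ℕ) :
    (∑ j ∈ Finset.range n, x j • e 𝕜 j) m = if m < n then x m else 0 := by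
  rw [← evalCLM_apply (𝕜 := 𝕜), map_sum]
  simp [Finset.sum_ite_eq, Finset.mem_range]

theorem tendsto_sum_range_smul_e (x : H 𝕜) :
    Tendsto (fun n => ∑ j ∈ Finset.range n, x j • e 𝕜 j) atTop (𝓝 x) := by
  refine Metric.nhds_basis_closedBall.tendsto_right_iff.2 fun ε hε => ?_
  obtain ⟨N, hN⟩ :=
    eventually_atTop.1 (Metric.nhds_basis_closedBall.tendsto_right_iff.1 x.tendsto_atTop ε hε)
  filter_upwards [eventually_ge_atTop N] with n hn
  rw [Metric.mem_closedBall, dist_eq_norm]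
  refine norm_le_of_forall_le hε.le fun m => ?_
  rw [coe_sub, Pi.sub_apply, sum_range_smul_e_apply]
  split_ifs with hm
  · simpa using hε.le
  · simpa using hN m (by omega)

/-- Ultrametricity bounds each partial sum `∑ j < n, x j • φ (e j)` by its largest term, and these
sums converge to `φ x`. -/
theorem opNorm_le_of_forall_norm_apply_e_le {F : Type*} [NormedAddCommGroup F]
    [NormedSpace 𝕜 F] [IsUltrametricDist F] (φ : H 𝕜 →L[𝕜] F) {C : ℝ}
    (h : ∀ j, ‖φ (e 𝕜 j)‖ ≤ C) : ‖φ‖ ≤ C := by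
  have hC : 0 ≤ C := (norm_nonneg _).trans (h 0)
  refine φ.opNorm_le_bound hC fun x => ?_
  refine le_of_tendsto' ((φ.continuous.tendsto x).comp (tendsto_sum_range_smul_e x)).norm
    fun n => ?_
  simp only [Function.comp_apply, map_sum, map_smul]
  refine IsUltrametricDist.norm_sum_le_of_forall_le_of_nonneg (by positivity) fun j _ => ?_
  rw [norm_smul, mul_comm]
  exact mul_le_mul (h j) (norm_apply_le x j) (norm_nonneg _) hC

end StandardBasis

theorem exists_ne_zero_le_norm_tendsto_zero (𝕜 : Type*) [NontriviallyNormedField 𝕜] {t : ℕ → ℝ}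
    (ht : Tendsto t atTop (𝓝 0)) :
    ∃ d : ℕ → 𝕜, (∀ i, d i ≠ 0) ∧ (∀ i, t i ≤ ‖d i‖) ∧ Tendsto d atTop (𝓝 0) := by
  obtain ⟨c, hc⟩ := NormedField.exists_one_lt_norm 𝕜
  -- `1 / (i + 1)` keeps `u` positive where `t` vanishes
  set u : ℕ → ℝ := fun i => |t i| + 1 / (i + 1)
  have hu : ∀ i, 0 < ‖c‖ * u i := fun i => by positivity
  choose d hd0 hdlt hdge _ using fun i =>
    rescale_to_shell_semi_normed hc (hu i) (x := (1 : 𝕜)) (by simp)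
  refine ⟨d, hd0, fun i => ?_, ?_⟩
  · have := hdge i
    rw [smul_eq_mul, mul_one, mul_div_cancel_left₀ _ (by positivity)] at this
    exact (le_abs_self _).trans ((le_add_of_nonneg_right (by positivity)).trans this)
  · refine squeeze_zero_norm (fun i => by simpa using (hdlt i).le) ?_
    simpa [u] using (((ht.abs).add tendsto_one_div_add_atTop_nhds_zero_nat).const_mul ‖c‖)

namespace IsTraceClass

variable {𝕜 : Type*} [NontriviallyNormedField 𝕜]

theorem tendsto_norm_row [IsUltrametricDist 𝕜] {R : H 𝕜 →L[𝕜] H 𝕜} (hR : IsTraceClass 𝕜 R) :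
    Tendsto (fun i => ‖evalCLM 𝕜 i ∘L R‖) atTop (𝓝 0) := by
  -- the entries tend to zero along the rows, uniformly in the column index
  have hunif : Tendsto (fun q : ℕ × ℕ => R (e 𝕜 q.2) q.1) (comap Prod.fst atTop) (𝓝 0) :=
    Tendsto.mono_left hR (by rw [← Nat.cofinite_eq_atTop, ← coprod_cofinite]; exact le_sup_left)
  rw [Metric.nhds_basis_closedBall.tendsto_right_iff] at hunif ⊢
  intro ε hε
  filter_upwards [eventually_comap.1 (hunif ε hε)] with i hi
  simp only [mem_closedBall_zero_iff] at hi
  rw [Metric.mem_closedBall, Real.dist_0_eq_abs, abs_of_nonneg (opNorm_nonneg _)]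
  exact opNorm_le_of_forall_norm_apply_e_le _ fun j => by simpa using hi (i, j) rfl

theorem of_sq_norm_le {R S : H 𝕜 →L[𝕜] H 𝕜} (hR : IsTraceClass 𝕜 R)
    (h : ∀ i j, ‖S (e 𝕜 j) i‖ ^ 2 ≤ ‖R (e 𝕜 j) i‖) : IsTraceClass 𝕜 S := by
  have hsqrt : Tendsto (fun q : ℕ × ℕ => √‖R (e 𝕜 q.2) q.1‖) cofinite (𝓝 0) := by
    simpa using (tendsto_zero_iff_norm_tendsto_zero.1 hR).sqrt
  exact squeeze_zero_norm (fun q => Real.le_sqrt_of_sq_le (h q.1 q.2)) hsqrt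

end IsTraceClass

def diagonal {𝕜 : Type*} [NontriviallyNormedField 𝕜] (d : ℕ → 𝕜) (hd : Tendsto d atTop (𝓝 0)) :
    H 𝕜 →L[𝕜] H 𝕜 :=
  c₀Pi (fun i => d i • evalCLM 𝕜 i)
    (squeeze_zero (fun _ => opNorm_nonneg _)
      (fun i => (opNorm_smul_le _ _).trans
        (mul_le_of_le_one_right (norm_nonneg _) (norm_evalCLM_le i)))
      (tendsto_zero_iff_norm_tendsto_zero.1 hd))

theorem isTraceClass_diagonal {𝕜 : Type*} [NontriviallyNormedField 𝕜] {d : ℕ → 𝕜}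
    (hd : Tendsto d atTop (𝓝 0)) : IsTraceClass 𝕜 (diagonal d hd) := by
  rw [IsTraceClass, NormedAddGroup.tendsto_nhds_zero]
  intro ε hε
  have hfin : {i | ¬‖d i‖ < ε}.Finite := eventually_cofinite.1
    (NormedAddGroup.tendsto_nhds_zero.1 (Nat.cofinite_eq_atTop ▸ hd) ε hε)
  refine eventually_cofinite.2 ((hfin.image fun i => (i, i)).subset ?_)
  rintro ⟨i, j⟩ hij
  by_cases h : i = j
  · subst h
    exact ⟨i, by simpa [diagonal] using hij, rfl⟩
  · simp [diagonal, h] at hij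
    linarith

/-- `T(H)² = T(H)`: every trace class operator is a product of two trace class operators. -/
theorem stmt18 (R : H K →L[K] H K) (hR : IsTraceClass K R) :
    ∃ S T : H K →L[K] H K, IsTraceClass K S ∧ IsTraceClass K T ∧
      ∀ x : H K, R x = S (T x) := by
  obtain ⟨d, hd0, hrow, hd⟩ := exists_ne_zero_le_norm_tendsto_zero K
    (by simpa using hR.tendsto_norm_row.sqrt)
  have hrow' : ∀ i, ‖(d i)⁻¹ • (evalCLM K i ∘L R)‖ ≤ ‖d i‖ := fun i => by
    refine (opNorm_smul_le _ _).trans ?_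
    rw [norm_inv, inv_mul_le_iff₀ (norm_pos_iff.2 (hd0 i)), ← sq]
    exact (Real.sqrt_le_iff.1 (hrow i)).2
  set T := c₀Pi (fun i => (d i)⁻¹ • (evalCLM K i ∘L R))
    (squeeze_zero (fun _ => opNorm_nonneg _) hrow' (tendsto_zero_iff_norm_tendsto_zero.1 hd))
  refine ⟨diagonal d hd, T, isTraceClass_diagonal hd, hR.of_sq_norm_le fun i j => ?_, fun x => ?_⟩
  · have hT : ‖T (e K j) i‖ ≤ ‖d i‖ := (norm_apply_e_le _ j).trans (hrow' i)
    calc ‖T (e K j) i‖ ^ 2 ≤ ‖d i‖ * ‖T (e K j) i‖ := by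
          rw [sq]; exact mul_le_mul_of_nonneg_right hT (norm_nonneg _)
      _ = ‖R (e K j) i‖ := by simp [T, ← norm_mul, hd0 i]
  · ext i
    simp [T, diagonal, hd0 i]
end
end
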